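/- arXiv:1703.00038 — 2 statements merged into one kernel-verified Lean document; each statement's English description precedes it below -/
import Mathlib

section
/- Let Q(x,y)=ax²+hxy+by² be an indefinite integer binary quadratic form whose discriminant D=h²−4ab is positive and not a perfect square, and let α ∈ (0,∞) be an irrational root of Q(α,1)=0 with continued fraction expansion α=[c₀;c₁,c₂,…]. Then along the associated word w_α (the path leading to the end of the Conway river of Q) the values of Q have zero growth: Λ_Q(w_α) = 0. -/
open Filter Matrix

noncomputable section

def Lm : Matrix (Fin 2) (Fin 2) ℤ := !![1, 1; 0, 1]

def Rm : Matrix (Fin 2) (Fin 2) ℤ := !![1, 0; 1, 1]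

/-- `pathMat w n = w 0 * w 1 * ⋯ * w (n-1)`. -/
def pathMat (w : ℕ → Matrix (Fin 2) (Fin 2) ℤ) (n : ℕ) : Matrix (Fin 2) (Fin 2) ℤ :=
  ((List.range n).map w).prod

/-- The value of the form `a x² + h x y + b y²`. -/
def Qval (a h b x y : ℤ) : ℤ := a * x ^ 2 + h * x * y + b * y ^ 2

/-- `|Qₙ(w)| = max(|aₙ|, |bₙ|, |cₙ|)` where the values are taken at the n-th superbase. -/
def Qnorm (a h b : ℤ) (w : ℕ → Matrix (Fin 2) (Fin 2) ℤ) (n : ℕ) : ℤ :=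
  max |Qval a h b (pathMat w n 0 0) (pathMat w n 1 0)|
    (max |Qval a h b (pathMat w n 0 1) (pathMat w n 1 1)|
      |Qval a h b (pathMat w n 0 0 + pathMat w n 0 1) (pathMat w n 1 0 + pathMat w n 1 1)|)

/-- The Lyapunov exponent `Λ_Q(w)` of the values of `Q` along the path `w`. -/
def LyapQ (a h b : ℤ) (w : ℕ → Matrix (Fin 2) (Fin 2) ℤ) : ℝ :=
  limsup (fun n : ℕ => Real.log (Qnorm a h b w n : ℝ) / (n : ℝ)) atTop

/-- The matrix Lyapunov exponent `Λ(w)`, via the spectral radius over ℂ. -/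
def Lyap (w : ℕ → Matrix (Fin 2) (Fin 2) ℤ) : ℝ :=
  limsup (fun n : ℕ =>
    Real.log ((spectralRadius ℂ ((pathMat w n).map ((↑) : ℤ → ℂ))).toReal) / (n : ℝ)) atTop

/-- The Gauss map iterates of `α`. -/
def cfXi (α : ℝ) : ℕ → ℝ
  | 0 => α
  | n + 1 => 1 / Int.fract (cfXi α n)

/-- The `n`-th partial quotient of `α`. -/
def cfA (α : ℝ) (n : ℕ) : ℤ := ⌊cfXi α n⌋

/-- The word consisting of `c 0` copies of `L`, then `c 1` copies of `R`, then `c 2`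
copies of `L`, and so on. -/
def wordOf (c : ℕ → ℕ) (n : ℕ) : Matrix (Fin 2) (Fin 2) ℤ :=
  if Nat.findGreatest (fun k => ∑ i ∈ Finset.range k, c i ≤ n) (n + 1) % 2 = 0 then Lm else Rm

/-- The word `w_α` associated to the continued fraction expansion of `α`. -/
def wordOfCF (α : ℝ) : ℕ → Matrix (Fin 2) (Fin 2) ℤ :=
  wordOf (fun n => (cfA α n).toNat)

/-!
Write `Aₙ = !![p, q; r, s]`. The gaps `p - α r` and `α s - q` start at `(1, α)`; the letter `L`
subtracts the first gap from the second and `R` the second from the first. In the `k`-th block of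
`w_α` the ratio of the two gaps runs from the complete quotient `ξ_k` down to
`ξ_k - c_k = fract ξ_k > 0`, whose inverse is `ξ_{k+1}`; so both gaps stay positive, i.e.
`q / s < α < p / r` for all `n`.

With `u = x - α y` we have `Q(x, y) = u (a u + (2 a α + h) y)`. Positive gaps and `det Aₙ = 1`
bound `|Q(p, r)| |Q(q, s)|` by a constant, and as `α` is irrational both factors are nonzero
integers, so `|Qₙ(w_α)|` stays bounded and `Λ_Q(w_α) = 0`.
-/

lemma pathMat_zero (w : ℕ → Matrix (Fin 2) (Fin 2) ℤ) : pathMat w 0 = 1 := by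
  simp [pathMat]

lemma pathMat_succ (w : ℕ → Matrix (Fin 2) (Fin 2) ℤ) (n : ℕ) :
    pathMat w (n + 1) = pathMat w n * w n := by
  simp [pathMat, List.range_succ]

section Letters

variable (A : Matrix (Fin 2) (Fin 2) ℤ) (i : Fin 2)

lemma mul_Lm_apply_zero : (A * Lm) i 0 = A i 0 := by
  simp [Lm, Matrix.mul_apply, Fin.sum_univ_two]

lemma mul_Lm_apply_one : (A * Lm) i 1 = A i 0 + A i 1 := by
  simp [Lm, Matrix.mul_apply, Fin.sum_univ_two]

lemma mul_Rm_apply_zero : (A * Rm) i 0 = A i 0 + A i 1 := by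
  simp [Rm, Matrix.mul_apply, Fin.sum_univ_two]

lemma mul_Rm_apply_one : (A * Rm) i 1 = A i 1 := by
  simp [Rm, Matrix.mul_apply, Fin.sum_univ_two]

end Letters

def IsLRWord (w : ℕ → Matrix (Fin 2) (Fin 2) ℤ) : Prop := ∀ n, w n = Lm ∨ w n = Rm

lemma isLRWord_wordOf (c : ℕ → ℕ) : IsLRWord (wordOf c) := fun n => by
  unfold wordOf; split_ifs <;> simp

section Path

variable {w : ℕ → Matrix (Fin 2) (Fin 2) ℤ} (hw : IsLRWord w)
include hw

lemma pathMat_nonneg (n : ℕ) (i j : Fin 2) : 0 ≤ pathMat w n i j := by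
  induction n generalizing j with
  | zero => rw [pathMat_zero]; fin_cases i <;> fin_cases j <;> simp
  | succ n ih =>
    rw [pathMat_succ]
    rcases hw n with hwn | hwn <;> fin_cases j
    all_goals simp only [hwn, mul_Lm_apply_zero, mul_Lm_apply_one, mul_Rm_apply_zero,
      mul_Rm_apply_one, Fin.zero_eta, Fin.mk_one]
    all_goals linarith [ih 0, ih 1]

lemma det_pathMat (n : ℕ) : (pathMat w n).det = 1 := by
  induction n with
  | zero => simp [pathMat_zero]
  | succ n ih => rcases hw n with hwn | hwn <;> simp [pathMat_succ, ih, hwn, Lm, Rm]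

lemma exists_pathMat_succ_col_eq_add (n : ℕ) :
    ∃ j, pathMat w (n + 1) 0 j = pathMat w n 0 0 + pathMat w n 0 1 ∧
      pathMat w (n + 1) 1 j = pathMat w n 1 0 + pathMat w n 1 1 := by
  rcases hw n with hwn | hwn
  · exact ⟨1, by simp only [pathMat_succ, hwn, mul_Lm_apply_one, and_self]⟩
  · exact ⟨0, by simp only [pathMat_succ, hwn, mul_Rm_apply_zero, and_self]⟩

end Path

def upperGap (α : ℝ) (w : ℕ → Matrix (Fin 2) (Fin 2) ℤ) (n : ℕ) : ℝ :=
  pathMat w n 0 0 - α * pathMat w n 1 0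

def lowerGap (α : ℝ) (w : ℕ → Matrix (Fin 2) (Fin 2) ℤ) (n : ℕ) : ℝ :=
  α * pathMat w n 1 1 - pathMat w n 0 1

section Gaps

variable {α : ℝ} {w : ℕ → Matrix (Fin 2) (Fin 2) ℤ} {n : ℕ}

lemma gaps_succ_of_eq_Lm (h : w n = Lm) :
    upperGap α w (n + 1) = upperGap α w n ∧
      lowerGap α w (n + 1) = lowerGap α w n - upperGap α w n := by
  refine ⟨by simp only [upperGap, pathMat_succ, h, mul_Lm_apply_zero], ?_⟩
  simp only [upperGap, lowerGap, pathMat_succ, h, mul_Lm_apply_one]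
  push_cast
  ring

lemma gaps_succ_of_eq_Rm (h : w n = Rm) :
    upperGap α w (n + 1) = upperGap α w n - lowerGap α w n ∧
      lowerGap α w (n + 1) = lowerGap α w n := by
  refine ⟨?_, by simp only [lowerGap, pathMat_succ, h, mul_Rm_apply_one]⟩
  simp only [upperGap, lowerGap, pathMat_succ, h, mul_Rm_apply_zero]
  push_cast
  ring

lemma upperGap_mul_add_lowerGap_mul (hw : IsLRWord w) (n : ℕ) :
    upperGap α w n * pathMat w n 1 1 + lowerGap α w n * pathMat w n 1 0 = 1 := by
  have hdet : ((pathMat w n).det : ℝ) = 1 := by exact_mod_cast det_pathMat hw n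
  rw [Matrix.det_fin_two] at hdet
  push_cast at hdet
  simp only [upperGap, lowerGap]
  linear_combination hdet

end Gaps

/-- The path follows the river: `q / s < α < p / r` for all `n`. -/
def OnRiver (α : ℝ) (w : ℕ → Matrix (Fin 2) (Fin 2) ℤ) : Prop :=
  ∀ n, 0 < upperGap α w n ∧ 0 < lowerGap α w n

section GapBounds

variable {α : ℝ} {w : ℕ → Matrix (Fin 2) (Fin 2) ℤ} (hw : IsLRWord w) (hriv : OnRiver α w)
include hw hriv

lemma upperGap_le_one (n : ℕ) : upperGap α w n ≤ 1 := by
  induction n with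
  | zero => simp [upperGap, pathMat_zero]
  | succ n ih =>
    rcases hw n with hwn | hwn
    · rw [(gaps_succ_of_eq_Lm hwn).1]; exact ih
    · rw [(gaps_succ_of_eq_Rm hwn).1]; linarith [(hriv n).2]

lemma lowerGap_le (n : ℕ) : lowerGap α w n ≤ α := by
  induction n with
  | zero => simp [lowerGap, pathMat_zero]
  | succ n ih =>
    rcases hw n with hwn | hwn
    · rw [(gaps_succ_of_eq_Lm hwn).2]; linarith [(hriv n).1]
    · rw [(gaps_succ_of_eq_Rm hwn).2]; exact ih

end GapBounds

section Form

variable {a h b : ℤ} {α : ℝ} (hroot : (a : ℝ) * α ^ 2 + (h : ℝ) * α + (b : ℝ) = 0)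
include hroot

lemma leading_coeff_ne_zero_of_irrational_root (hD : 0 < h ^ 2 - 4 * a * b)
    (hirr : Irrational α) : a ≠ 0 := by
  rintro rfl
  have hh : h ≠ 0 := by rintro rfl; simp at hD
  refine hirr ⟨(-b / h : ℚ), ?_⟩
  have : (h : ℝ) ≠ 0 := by exact_mod_cast hh
  push_cast
  field_simp
  linear_combination -hroot

lemma Qval_eq_of_root (x y : ℤ) :
    (Qval a h b x y : ℝ) = (x - α * y) * (a * (x - α * y) + (2 * a * α + h) * y) := by
  simp only [Qval]
  push_cast
  linear_combination (y : ℝ) ^ 2 * hroot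

lemma abs_Qval_le_of_root {x y : ℤ} (hy : 0 ≤ y) :
    |(Qval a h b x y : ℝ)| ≤
      |(a : ℝ)| * (x - α * y) ^ 2 + |2 * a * α + h| * |x - α * y| * y := by
  have hyR : (0 : ℝ) ≤ y := by exact_mod_cast hy
  rw [Qval_eq_of_root hroot, abs_mul]
  calc |(x : ℝ) - α * y| * |a * (x - α * y) + (2 * a * α + h) * y|
      ≤ |(x : ℝ) - α * y| * (|(a : ℝ)| * |x - α * y| + |2 * a * α + h| * y) := by
        gcongr
        refine (abs_add_le _ _).trans_eq ?_
        rw [abs_mul, abs_mul, abs_of_nonneg hyR]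
    _ = _ := by rw [← sq_abs (x - α * y : ℝ)]; ring

lemma Qval_ne_zero_of_root (ha : a ≠ 0) (hirr : Irrational α) {x y : ℤ}
    (hxy : (x : ℝ) - α * y ≠ 0) : Qval a h b x y ≠ 0 := by
  intro hQ
  have hlin : (a : ℝ) * x + (a * α + h) * y = 0 := by
    have := Qval_eq_of_root hroot x y
    rw [hQ, Int.cast_zero, eq_comm, mul_eq_zero] at this
    linear_combination this.resolve_left hxy
  by_cases hy : y = 0
  · subst hy
    have : (x : ℝ) = 0 := by simpa [ha] using hlin
    simp [this] at hxy
  · refine hirr ⟨(-(a * x + h * y) / (a * y) : ℚ), ?_⟩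
    have : (a : ℝ) ≠ 0 := by exact_mod_cast ha
    have : (y : ℝ) ≠ 0 := by exact_mod_cast hy
    push_cast
    field_simp
    linarith

end Form

lemma gap_product_le {A E F G M r s : ℝ} (hA : 0 ≤ A) (hE : 0 ≤ E) (hF : 0 ≤ F) (hG : 0 ≤ G)
    (hr : 0 ≤ r) (hs : 0 ≤ s) (hF1 : F ≤ 1) (hGM : G ≤ M) (hFs : F * s ≤ 1) (hGr : G * r ≤ 1) :
    (A * F ^ 2 + E * F * r) * (A * G ^ 2 + E * G * s) ≤ (A * M + E) ^ 2 := by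
  have hM : 0 ≤ M := hG.trans hGM
  have hFG : F * G ≤ M := by nlinarith
  calc (A * F ^ 2 + E * F * r) * (A * G ^ 2 + E * G * s)
      = A ^ 2 * (F * G) ^ 2 + A * E * (F * G) * (F * s) + A * E * (F * G) * (G * r)
          + E ^ 2 * (F * s) * (G * r) := by ring
    _ ≤ A ^ 2 * M ^ 2 + A * E * M * 1 + A * E * M * 1 + E ^ 2 * 1 * 1 := by gcongr
    _ = (A * M + E) ^ 2 := by ring

section RiverBound

variable {a h b : ℤ} {α : ℝ} {w : ℕ → Matrix (Fin 2) (Fin 2) ℤ}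
  (hroot : (a : ℝ) * α ^ 2 + (h : ℝ) * α + (b : ℝ) = 0) (ha : a ≠ 0) (hirr : Irrational α)
  (hw : IsLRWord w) (hriv : OnRiver α w)
include hroot ha hirr hriv

lemma one_le_abs_Qval_pathMat (n : ℕ) (j : Fin 2) :
    1 ≤ |(Qval a h b (pathMat w n 0 j) (pathMat w n 1 j) : ℝ)| := by
  have hgap : (pathMat w n 0 j : ℝ) - α * pathMat w n 1 j ≠ 0 := by
    fin_cases j
    · exact (hriv n).1.ne'
    · have hg : 0 < lowerGap α w n := (hriv n).2
      unfold lowerGap at hg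
      exact (by linarith : (pathMat w n 0 1 : ℝ) - α * pathMat w n 1 1 < 0).ne
  exact_mod_cast Int.one_le_abs (Qval_ne_zero_of_root hroot ha hirr hgap)

lemma one_le_Qnorm (n : ℕ) : (1 : ℝ) ≤ Qnorm a h b w n := by
  push_cast [Qnorm]
  exact le_max_of_le_left (one_le_abs_Qval_pathMat hroot ha hirr hriv n 0)

include hw

/-- Both values are nonzero integers, so each is bounded by their product. -/
lemma abs_Qval_pathMat_le (n : ℕ) (j : Fin 2) :
    |(Qval a h b (pathMat w n 0 j) (pathMat w n 1 j) : ℝ)| ≤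
      (|(a : ℝ)| * α + |2 * a * α + h|) ^ 2 := by
  have hr : (0 : ℝ) ≤ pathMat w n 1 0 := by exact_mod_cast pathMat_nonneg hw n 1 0
  have hs : (0 : ℝ) ≤ pathMat w n 1 1 := by exact_mod_cast pathMat_nonneg hw n 1 1
  obtain ⟨hf, hg⟩ := hriv n
  have hdet := upperGap_mul_add_lowerGap_mul (α := α) hw n
  have hQ0 := abs_Qval_le_of_root hroot (x := pathMat w n 0 0) (pathMat_nonneg hw n 1 0)
  have hQ1 := abs_Qval_le_of_root hroot (x := pathMat w n 0 1) (pathMat_nonneg hw n 1 1)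
  rw [← upperGap, abs_of_pos hf] at hQ0
  rw [← neg_sub, neg_sq, abs_neg, ← lowerGap, abs_of_pos hg] at hQ1
  have hprod := (mul_le_mul hQ0 hQ1 (abs_nonneg _) (by positivity)).trans <|
    gap_product_le (abs_nonneg _) (abs_nonneg _) hf.le hg.le hr hs
      (upperGap_le_one hw hriv n) (lowerGap_le hw hriv n)
      (by nlinarith [mul_nonneg hg.le hr]) (by nlinarith [mul_nonneg hf.le hs])
  have h0 := one_le_abs_Qval_pathMat hroot ha hirr hriv n 0
  have h1 := one_le_abs_Qval_pathMat hroot ha hirr hriv n 1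
  fin_cases j
  · exact le_mul_of_one_le_right (abs_nonneg _) h1 |>.trans hprod
  · exact le_mul_of_one_le_left (abs_nonneg _) h0 |>.trans hprod

lemma Qnorm_le (n : ℕ) : (Qnorm a h b w n : ℝ) ≤ (|(a : ℝ)| * α + |2 * a * α + h|) ^ 2 := by
  have hbound := abs_Qval_pathMat_le hroot ha hirr hw hriv
  obtain ⟨j, hp, hr⟩ := exists_pathMat_succ_col_eq_add hw n
  push_cast [Qnorm]
  refine max_le (hbound n 0) (max_le (hbound n 1) ?_)
  rw [← hp, ← hr]
  exact hbound (n + 1) j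

end RiverBound

section ContinuedFraction

variable {α : ℝ} (hirr : Irrational α)
include hirr

lemma irrational_cfXi : ∀ k, Irrational (cfXi α k)
  | 0 => hirr
  | k + 1 => by
    rw [cfXi, one_div]
    exact ((irrational_cfXi k).sub_intCast ⌊cfXi α k⌋).inv

lemma fract_cfXi_pos (k : ℕ) : 0 < Int.fract (cfXi α k) :=
  Int.fract_pos.mpr ((irrational_cfXi hirr k).ne_int _)

lemma cfXi_succ_mul_fract (k : ℕ) : cfXi α (k + 1) * Int.fract (cfXi α k) = 1 := by
  rw [cfXi, one_div, inv_mul_cancel₀ (fract_cfXi_pos hirr k).ne']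

lemma one_lt_cfXi_succ (k : ℕ) : 1 < cfXi α (k + 1) :=
  one_lt_one_div (fract_cfXi_pos hirr k) (Int.fract_lt_one _)

lemma one_le_toNat_cfA_succ (k : ℕ) : 1 ≤ (cfA α (k + 1)).toNat := by
  have : 1 ≤ cfA α (k + 1) := Int.le_floor.mpr (by exact_mod_cast (one_lt_cfXi_succ hirr k).le)
  omega

lemma toNat_cfA_cast (hpos : 0 < α) (k : ℕ) :
    ((cfA α k).toNat : ℝ) = cfXi α k - Int.fract (cfXi α k) := by
  have hxi : 0 ≤ cfXi α k := by
    cases k with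
    | zero => exact hpos.le
    | succ k => exact zero_le_one.trans (one_lt_cfXi_succ hirr k).le
  rw [Int.self_sub_fract, ← Int.toNat_of_nonneg (Int.floor_nonneg.mpr hxi), Int.cast_natCast]
  rfl

end ContinuedFraction

def blockStart (c : ℕ → ℕ) (k : ℕ) : ℕ := ∑ i ∈ Finset.range k, c i

section Blocks

variable {c : ℕ → ℕ}

lemma blockStart_succ (k : ℕ) : blockStart c (k + 1) = blockStart c k + c k :=
  Finset.sum_range_succ _ _

lemma blockStart_mono : Monotone (blockStart c) := fun _ _ hij =>
  Finset.sum_le_sum_of_subset (Finset.range_subset_range.mpr hij)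

variable (hc : ∀ i, 0 < c (i + 1))
include hc

lemma le_blockStart_succ (k : ℕ) : k ≤ blockStart c (k + 1) := by
  induction k with
  | zero => exact Nat.zero_le _
  | succ k ih => have := hc k; rw [blockStart_succ]; omega

lemma wordOf_blockStart_add {k j : ℕ} (hj : j < c k) :
    wordOf c (blockStart c k + j) = if k % 2 = 0 then Lm else Rm := by
  have hK : Nat.findGreatest (fun m => blockStart c m ≤ blockStart c k + j)
      (blockStart c k + j + 1) = k := by
    refine Nat.findGreatest_eq_iff.mpr ⟨?_, fun _ => Nat.le_add_right _ _, fun m hkm _ => ?_⟩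
    · cases k with
      | zero => exact Nat.zero_le _
      | succ k => have := le_blockStart_succ hc k; omega
    · have := blockStart_mono (c := c) (Nat.succ_le_of_lt hkm)
      rw [blockStart_succ] at this
      omega
  exact congrArg (fun K => if K % 2 = 0 then Lm else Rm) hK

lemma exists_eq_blockStart_add (n : ℕ) : ∃ k j, j < c k ∧ n = blockStart c k + j := by
  have hex : ∃ k, n < blockStart c (k + 1) :=
    ⟨n + 1, Nat.lt_succ_self n |>.trans_le (le_blockStart_succ hc (n + 1))⟩
  have hlt := Nat.find_spec hex
  have hle : blockStart c (Nat.find hex) ≤ n := by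
    rcases hk : Nat.find hex with _ | k
    · exact Nat.zero_le _
    · exact not_lt.mp (Nat.find_min hex (hk ▸ Nat.lt_succ_self k))
  rw [blockStart_succ] at hlt
  exact ⟨Nat.find hex, n - blockStart c (Nat.find hex), by omega, by omega⟩

end Blocks

/-- Inside block `k` the word repeats one letter; ordered so, each step subtracts the first
gap from the second. -/
def orientedGaps (α : ℝ) (w : ℕ → Matrix (Fin 2) (Fin 2) ℤ) (k n : ℕ) : ℝ × ℝ :=
  if k % 2 = 0 then (upperGap α w n, lowerGap α w n) else (lowerGap α w n, upperGap α w n)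

section Oriented

variable {α : ℝ} {w : ℕ → Matrix (Fin 2) (Fin 2) ℤ} {k : ℕ}

lemma orientedGaps_succ {n : ℕ} (h : w n = if k % 2 = 0 then Lm else Rm) :
    orientedGaps α w k (n + 1) =
      ((orientedGaps α w k n).1, (orientedGaps α w k n).2 - (orientedGaps α w k n).1) := by
  unfold orientedGaps
  split_ifs at h ⊢
  · rw [(gaps_succ_of_eq_Lm h).1, (gaps_succ_of_eq_Lm h).2]
  · rw [(gaps_succ_of_eq_Rm h).1, (gaps_succ_of_eq_Rm h).2]

lemma orientedGaps_succ_left (n : ℕ) :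
    orientedGaps α w (k + 1) n = (orientedGaps α w k n).swap := by
  unfold orientedGaps
  split_ifs <;> first | rfl | omega

lemma orientedGaps_add {m j : ℕ} (hword : ∀ i < j, w (m + i) = if k % 2 = 0 then Lm else Rm) :
    orientedGaps α w k (m + j) =
      ((orientedGaps α w k m).1, (orientedGaps α w k m).2 - j * (orientedGaps α w k m).1) := by
  induction j with
  | zero => simp
  | succ j ih =>
    rw [← add_assoc, orientedGaps_succ (hword j j.lt_succ_self),
      ih fun i hi => hword i (hi.trans j.lt_succ_self)]
    ext <;> push_cast <;> ring

lemma pos_of_orientedGaps_pos {n : ℕ} (h1 : 0 < (orientedGaps α w k n).1)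
    (h2 : 0 < (orientedGaps α w k n).2) : 0 < upperGap α w n ∧ 0 < lowerGap α w n := by
  unfold orientedGaps at h1 h2
  split_ifs at h1 h2
  exacts [⟨h1, h2⟩, ⟨h2, h1⟩]

end Oriented

section RiverOfContinuedFraction

variable {α : ℝ} (hpos : 0 < α) (hirr : Irrational α)
include hpos hirr

lemma exists_orientedGaps_blockStart (k : ℕ) :
    ∃ x > 0, orientedGaps α (wordOfCF α) k (blockStart (fun i => (cfA α i).toNat) k) =
      (x, cfXi α k * x) := by
  induction k with
  | zero => exact ⟨1, one_pos, by simp [orientedGaps, blockStart, upperGap, lowerGap,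
      pathMat_zero, cfXi]⟩
  | succ k ih =>
    obtain ⟨x, hx, hk⟩ := ih
    have hend := orientedGaps_add (α := α) (w := wordOfCF α) (j := (cfA α k).toNat)
      fun i hi => wordOf_blockStart_add (c := fun i => (cfA α i).toNat)
        (one_le_toNat_cfA_succ hirr) hi
    rw [hk, ← blockStart_succ, toNat_cfA_cast hirr hpos] at hend
    refine ⟨Int.fract (cfXi α k) * x, mul_pos (fract_cfXi_pos hirr k) hx, ?_⟩
    rw [orientedGaps_succ_left, hend, Prod.swap_prod_mk, Prod.mk.injEq]
    constructor
    · ring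
    · linear_combination -x * cfXi_succ_mul_fract hirr k

lemma onRiver_wordOfCF : OnRiver α (wordOfCF α) := by
  intro n
  obtain ⟨k, j, hj, rfl⟩ := exists_eq_blockStart_add (c := fun i => (cfA α i).toNat)
    (one_le_toNat_cfA_succ hirr) n
  obtain ⟨x, hx, hk⟩ := exists_orientedGaps_blockStart hpos hirr k
  have hgaps := orientedGaps_add (α := α) (w := wordOfCF α) (j := j)
    fun i hi => wordOf_blockStart_add (c := fun i => (cfA α i).toNat)
      (one_le_toNat_cfA_succ hirr) (hi.trans hj)
  rw [hk] at hgaps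
  have hjc : (j : ℝ) + 1 ≤ (cfA α k).toNat := by exact_mod_cast hj
  rw [toNat_cfA_cast hirr hpos] at hjc
  refine pos_of_orientedGaps_pos (by rw [hgaps]; exact hx) ?_
  rw [hgaps]
  nlinarith [fract_cfXi_pos hirr k]

end RiverOfContinuedFraction

lemma tendsto_log_div_natCast_of_le {u : ℕ → ℝ} {C : ℝ} (h1 : ∀ n, 1 ≤ u n) (hC : ∀ n, u n ≤ C) :
    Tendsto (fun n : ℕ => Real.log (u n) / n) atTop (nhds 0) :=
  tendsto_of_tendsto_of_tendsto_of_le_of_le tendsto_const_nhds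
    (tendsto_const_div_atTop_nhds_zero_nat (Real.log C))
    (fun n => div_nonneg (Real.log_nonneg (h1 n)) n.cast_nonneg)
    (fun n => div_le_div_of_nonneg_right
      (Real.log_le_log (zero_lt_one.trans_le (h1 n)) (hC n)) n.cast_nonneg)

theorem lyapunov_vanishes_on_river_general (a h b : ℤ)
    (hD : 0 < h ^ 2 - 4 * a * b)
    (α : ℝ) (hpos : 0 < α) (hirr : Irrational α)
    (hroot : (a : ℝ) * α ^ 2 + (h : ℝ) * α + (b : ℝ) = 0) :
    LyapQ a h b (wordOfCF α) = 0 := by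
  have ha := leading_coeff_ne_zero_of_irrational_root hroot hD hirr
  have hriv := onRiver_wordOfCF hpos hirr
  exact (tendsto_log_div_natCast_of_le (one_le_Qnorm hroot ha hirr hriv)
    (Qnorm_le hroot ha hirr (isLRWord_wordOf _) hriv)).limsup_eq

/-- For an indefinite integer binary quadratic form `Q` whose discriminant is
positive and not a perfect square, and an irrational root `α ∈ (0,∞)` of `Q(α,1)=0`, the
values of `Q` along the word `w_α` associated to the continued fraction expansion of `α`
(the path leading to the end of the Conway river) have zero growth: `Λ_Q(w_α) = 0`. -/
theorem lyapunov_vanishes_on_river (a h b : ℤ)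
    (hD : 0 < h ^ 2 - 4 * a * b) (hns : ¬ IsSquare (h ^ 2 - 4 * a * b))
    (α : ℝ) (hpos : 0 < α) (hirr : Irrational α)
    (hroot : (a : ℝ) * α ^ 2 + (h : ℝ) * α + (b : ℝ) = 0) :
    LyapQ a h b (wordOfCF α) = 0 :=
  lyapunov_vanishes_on_river_general a h b hD α hpos hirr hroot

end
end

section
/- Let α = [a₀; \overline{b₁, …, b_l}] be the continued fraction expansion of a quadratic irrational (a₀ ∈ ℤ, bⱼ ≥ 1) with a₀ < b_l. Then the conjugate of α is given by the negative continued fraction ᾱ = −[b_l−a₀; \overline{b_{l−1}, …, b₁, b_l}], i.e. ᾱ = −(b_l−a₀ + 1/β̃) where β̃ = [\overline{b_{l−1}, b_{l−2}, …, b₁, b_l}] (indices cyclic modulo l; for l=1 this reads ᾱ = −[b₁−a₀; \overline{b₁}]). -/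
/-!
Shifting by the integer `b_l - a₀` turns `α` into `γ = α + b_l - a₀`, whose expansion is the purely
periodic `[b_l, b₁, …, b_{l-1}]`. Writing continuants as products of the matrices
`!![cᵢ, 1; 1, 0]`, periodicity makes `γ` a fixed point of the Möbius map of one period, i.e. a root
of an integer quadratic. The reversed period has the transposed matrix, so its value `β̃` is a fixed
point of the transposed Möbius map, which says exactly that `-1/β̃` is a root of the same
quadratic. As `-1/β̃ < 0 < γ`, it is the other root, and two integer quadratics sharing an
irrational root have the same second root, so `ᾱ + b_l - a₀ = -1/β̃`.
-/

open Filter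

noncomputable section

/-- Continued fraction numerators: `cfNum c (n+1) = pₙ` with `p₋₁ = 1`, `p₀ = c 0`,
`pₙ = cₙ pₙ₋₁ + pₙ₋₂`. -/
def cfNum (c : ℕ → ℤ) : ℕ → ℤ
  | 0 => 1
  | 1 => c 0
  | n + 2 => c (n + 1) * cfNum c (n + 1) + cfNum c n

/-- Continued fraction denominators: `cfDen c (n+1) = qₙ` with `q₋₁ = 0`, `q₀ = 1`,
`qₙ = cₙ qₙ₋₁ + qₙ₋₂`. -/
def cfDen (c : ℕ → ℤ) : ℕ → ℤ
  | 0 => 0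
  | 1 => 1
  | n + 2 => c (n + 1) * cfDen c (n + 1) + cfDen c n

/-- The `n`-th convergent `pₙ/qₙ` of the continued fraction with partial quotients `c`. -/
def cfConv (c : ℕ → ℤ) (n : ℕ) : ℝ := (cfNum c (n + 1) : ℝ) / (cfDen c (n + 1) : ℝ)

open Topology

def cfMat (c : ℕ → ℤ) (n : ℕ) : Matrix (Fin 2) (Fin 2) ℤ :=
  ((List.range n).map fun i => !![c i, 1; 1, 0]).prod

theorem cfMat_succ (c : ℕ → ℤ) (n : ℕ) :
    cfMat c (n + 1) = !![cfNum c (n + 1), cfNum c n; cfDen c (n + 1), cfDen c n] := by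
  induction n with
  | zero => simp [cfMat, cfNum, cfDen]
  | succ n ih =>
    rw [cfMat, List.range_succ, List.map_append, List.prod_append, ← cfMat, ih,
      List.map_singleton, List.prod_singleton, Matrix.mul_fin_two]
    simp [cfNum, cfDen, add_comm, mul_comm]

theorem cfMat_add (c : ℕ → ℤ) (m n : ℕ) :
    cfMat c (m + n) = cfMat c m * cfMat (fun i => c (m + i)) n := by
  simp only [cfMat, List.range_add, List.map_append, List.prod_append, List.map_map]
  rfl

theorem cfMat_congr {c c' : ℕ → ℤ} {n : ℕ} (h : ∀ i < n, c i = c' i) :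
    cfMat c n = cfMat c' n := by
  unfold cfMat
  rw [List.map_congr_left fun i hi => by rw [h i (List.mem_range.1 hi)]]

theorem cfMat_transpose (c : ℕ → ℤ) (n : ℕ) :
    (cfMat c n).transpose = cfMat (fun i => c (n - 1 - i)) n := by
  rw [cfMat, Matrix.transpose_list_prod, List.map_map, ← List.map_reverse,
    List.range_eq_range', List.reverse_range', List.map_map, cfMat, List.range_eq_range']
  congr 1
  apply List.map_congr_left
  intro i _
  ext a b
  fin_cases a <;> fin_cases b <;> simp

theorem cfNum_cfDen_reverse {c d : ℕ → ℤ} {k : ℕ} (hd : ∀ i ≤ k, d i = c (k - i)) :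
    !![cfNum d (k + 1), cfNum d k; cfDen d (k + 1), cfDen d k] =
      !![cfNum c (k + 1), cfDen c (k + 1); cfNum c k, cfDen c k] := by
  have h := cfMat_transpose c (k + 1)
  rw [Nat.add_sub_cancel, ← cfMat_congr fun i hi => hd i (Nat.le_of_lt_succ hi), cfMat_succ,
    cfMat_succ] at h
  rw [← h]
  ext i j
  fin_cases i <;> fin_cases j <;> rfl

theorem cfNum_mul_cfDen_sub (c : ℕ → ℤ) (n : ℕ) :
    cfNum c (n + 1) * cfDen c n - cfNum c n * cfDen c (n + 1) = (-1) ^ (n + 1) :=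
  calc _ = (cfMat c (n + 1)).det := by rw [cfMat_succ, Matrix.det_fin_two_of]
    _ = (-1) ^ (n + 1) := by
      rw [cfMat, ← Matrix.coe_detMonoidHom, MonoidHom.map_list_prod, List.map_map]
      simp [Function.comp_def, Matrix.det_fin_two_of]

theorem cfConv_add (c : ℕ → ℤ) (m n : ℕ) (hn : cfDen (fun i => c (m + 1 + i)) (n + 1) ≠ 0) :
    cfConv c (m + 1 + n) =
      (cfNum c (m + 1) * cfConv (fun i => c (m + 1 + i)) n + cfNum c m) /
        (cfDen c (m + 1) * cfConv (fun i => c (m + 1 + i)) n + cfDen c m) := by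
  have h := cfMat_add c (m + 1) (n + 1)
  rw [← add_assoc, cfMat_succ, cfMat_succ, cfMat_succ, Matrix.mul_fin_two] at h
  simp only [EmbeddingLike.apply_eq_iff_eq, Matrix.vecCons_inj, and_true] at h
  rw [cfConv, cfConv, h.1.1, h.2.1]
  have hn' : (cfDen (fun i => c (m + 1 + i)) (n + 1) : ℝ) ≠ 0 := by exact_mod_cast hn
  rw [mul_div_assoc', mul_div_assoc', div_add' _ _ _ hn', div_add' _ _ _ hn',
    div_div_div_cancel_right₀ hn']
  push_cast
  ring

section Positive

variable {c : ℕ → ℤ}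

theorem cfDen_nonneg (hc : ∀ m, 1 ≤ c (m + 1)) : ∀ n, 0 ≤ cfDen c n
  | 0 => le_rfl
  | 1 => zero_le_one
  | n + 2 => by
    have := cfDen_nonneg hc n
    have := cfDen_nonneg hc (n + 1)
    show 0 ≤ c (n + 1) * cfDen c (n + 1) + cfDen c n
    nlinarith [hc n]

theorem cfDen_le_cfDen_succ (hc : ∀ m, 1 ≤ c (m + 1)) : ∀ n, cfDen c n ≤ cfDen c (n + 1)
  | 0 => zero_le_one
  | n + 1 => by
    show _ ≤ c (n + 1) * cfDen c (n + 1) + cfDen c n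
    nlinarith [hc n, cfDen_nonneg hc n, cfDen_nonneg hc (n + 1)]

theorem one_le_cfDen_succ (hc : ∀ m, 1 ≤ c (m + 1)) : ∀ n, 1 ≤ cfDen c (n + 1)
  | 0 => le_rfl
  | n + 1 => (one_le_cfDen_succ hc n).trans (cfDen_le_cfDen_succ hc (n + 1))

theorem two_pow_le_cfDen_mul (hc : ∀ m, 1 ≤ c (m + 1)) :
    ∀ n, 2 ^ n ≤ cfDen c (n + 1) * cfDen c (n + 2)
  | 0 => by simpa [cfDen] using hc 0
  | n + 1 => by
    have ih := two_pow_le_cfDen_mul hc n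
    have hq : 2 * cfDen c (n + 1) ≤ cfDen c (n + 3) := by
      show _ ≤ c (n + 2) * cfDen c (n + 2) + cfDen c (n + 1)
      nlinarith [hc (n + 1), cfDen_nonneg hc (n + 2), cfDen_le_cfDen_succ hc (n + 1)]
    rw [pow_succ]
    nlinarith [cfDen_nonneg hc (n + 2)]

theorem one_div_cfDen_mul_le (hc : ∀ m, 1 ≤ c (m + 1)) (n : ℕ) :
    1 / ((cfDen c (n + 1) : ℝ) * cfDen c (n + 2)) ≤ (1 / 2) ^ n := by
  rw [one_div_pow]
  exact one_div_le_one_div_of_le (by positivity) (by exact_mod_cast two_pow_le_cfDen_mul hc n)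

theorem abs_cfConv_succ_sub (hc : ∀ m, 1 ≤ c (m + 1)) (n : ℕ) :
    |cfConv c (n + 1) - cfConv c n| = 1 / ((cfDen c (n + 1) : ℝ) * cfDen c (n + 2)) := by
  have h₁ : (0 : ℝ) < cfDen c (n + 1) := by exact_mod_cast one_le_cfDen_succ hc n
  have h₂ : (0 : ℝ) < cfDen c (n + 2) := by exact_mod_cast one_le_cfDen_succ hc (n + 1)
  have hdet : (cfNum c (n + 2) * cfDen c (n + 1) - cfNum c (n + 1) * cfDen c (n + 2) : ℝ) =
      (-1) ^ (n + 2) := by exact_mod_cast cfNum_mul_cfDen_sub c (n + 1)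
  rw [cfConv, cfConv, div_sub_div _ _ h₂.ne' h₁.ne', mul_comm (cfDen c (n + 2) : ℝ), hdet,
    abs_div, abs_mul, abs_of_pos h₁, abs_of_pos h₂]
  simp [mul_comm]

theorem cauchySeq_cfConv (hc : ∀ m, 1 ≤ c (m + 1)) : CauchySeq (cfConv c) :=
  cauchySeq_of_le_geometric (1 / 2) 1 (by norm_num) fun n => by
    rw [one_mul, dist_comm, Real.dist_eq, abs_cfConv_succ_sub hc]
    exact one_div_cfDen_mul_le hc n

theorem cfDen_le_cfNum (hc : ∀ m, 1 ≤ c m) : ∀ n, cfDen c n ≤ cfNum c n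
  | 0 => zero_le_one
  | 1 => hc 0
  | n + 2 => by
    have := cfDen_le_cfNum hc n
    have := cfDen_le_cfNum hc (n + 1)
    show c (n + 1) * cfDen c (n + 1) + cfDen c n ≤ c (n + 1) * cfNum c (n + 1) + cfNum c n
    nlinarith [hc (n + 1)]

theorem one_le_cfConv (hc : ∀ m, 1 ≤ c m) (n : ℕ) : 1 ≤ cfConv c n := by
  have hq : (1 : ℝ) ≤ cfDen c (n + 1) := by exact_mod_cast one_le_cfDen_succ (fun m => hc _) n
  rw [cfConv, one_le_div (one_pos.trans_le hq)]
  exact_mod_cast cfDen_le_cfNum hc (n + 1)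

end Positive

section GaussMap

variable {x : ℝ}

theorem Irrational.fract_pos (hx : Irrational x) : 0 < Int.fract x :=
  Int.fract_pos.2 (hx.ne_int _)

theorem cfXi_irrational (hx : Irrational x) : ∀ n, Irrational (cfXi x n)
  | 0 => hx
  | n + 1 => by
    have := ((cfXi_irrational hx n).sub_intCast ⌊cfXi x n⌋).inv
    rwa [Int.self_sub_floor, inv_eq_one_div] at this

theorem cfXi_sub_cfA_mul_cfXi_succ (hx : Irrational x) (n : ℕ) :
    (cfXi x n - cfA x n) * cfXi x (n + 1) = 1 :=
  mul_one_div_cancel (cfXi_irrational hx n).fract_pos.ne'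

theorem one_lt_cfXi_succ_s10 (hx : Irrational x) (n : ℕ) : 1 < cfXi x (n + 1) :=
  one_lt_one_div (cfXi_irrational hx n).fract_pos (Int.fract_lt_one _)

theorem one_le_cfA_succ (hx : Irrational x) (n : ℕ) : 1 ≤ cfA x (n + 1) :=
  Int.le_floor.2 (by exact_mod_cast (one_lt_cfXi_succ_s10 hx n).le)

theorem self_mul_cfDen_cfXi_add (hx : Irrational x) (n : ℕ) :
    x * (cfDen (cfA x) (n + 1) * cfXi x (n + 1) + cfDen (cfA x) n) =
      cfNum (cfA x) (n + 1) * cfXi x (n + 1) + cfNum (cfA x) n := by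
  induction n with
  | zero =>
    have h := cfXi_sub_cfA_mul_cfXi_succ hx 0
    rw [show cfXi x 0 = x from rfl] at h
    simp only [cfNum, cfDen, Int.cast_one, Int.cast_zero, one_mul, add_zero]
    linear_combination h
  | succ n ih =>
    simp only [cfNum, cfDen, Int.cast_add, Int.cast_mul]
    linear_combination cfXi x (n + 2) * ih + (cfNum (cfA x) (n + 1) -
      x * cfDen (cfA x) (n + 1)) * cfXi_sub_cfA_mul_cfXi_succ hx (n + 1)

theorem abs_sub_cfConv_cfA_le (hx : Irrational x) (n : ℕ) :
    |x - cfConv (cfA x) n| ≤ 1 / ((cfDen (cfA x) (n + 1) : ℝ) * cfDen (cfA x) (n + 2)) := by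
  set ξ := cfXi x (n + 1)
  have hc := one_le_cfA_succ hx
  have h₁ : (0 : ℝ) < cfDen (cfA x) (n + 1) := by exact_mod_cast one_le_cfDen_succ hc n
  have h₂ : (0 : ℝ) < cfDen (cfA x) (n + 2) := by exact_mod_cast one_le_cfDen_succ hc (n + 1)
  have h₀ : (0 : ℝ) ≤ cfDen (cfA x) n := by exact_mod_cast cfDen_nonneg hc n
  have hq : (cfDen (cfA x) (n + 2) : ℝ) ≤ cfDen (cfA x) (n + 1) * ξ + cfDen (cfA x) n := by
    have : (cfA x (n + 1) : ℝ) ≤ ξ := Int.floor_le _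
    simp only [cfDen, Int.cast_add, Int.cast_mul]
    nlinarith
  have hdet : (cfNum (cfA x) (n + 1) * cfDen (cfA x) n -
      cfNum (cfA x) n * cfDen (cfA x) (n + 1) : ℝ) = (-1) ^ (n + 1) := by
    exact_mod_cast cfNum_mul_cfDen_sub (cfA x) n
  have hpos : (0 : ℝ) < cfDen (cfA x) (n + 1) * ξ + cfDen (cfA x) n := h₂.trans_le hq
  have hdiff : x - cfConv (cfA x) n = -(-1) ^ (n + 1) /
      (cfDen (cfA x) (n + 1) * (cfDen (cfA x) (n + 1) * ξ + cfDen (cfA x) n)) := by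
    rw [cfConv, eq_div_iff (mul_pos h₁ hpos).ne', ← hdet]
    field_simp
    linear_combination (cfDen (cfA x) (n + 1) : ℝ) * self_mul_cfDen_cfXi_add hx n
  rw [hdiff, abs_div, abs_neg, abs_pow, abs_neg, abs_one, one_pow, abs_of_pos (mul_pos h₁ hpos)]
  gcongr

theorem tendsto_cfConv_cfA (hx : Irrational x) : Tendsto (cfConv (cfA x)) atTop (𝓝 x) := by
  rw [tendsto_iff_norm_sub_tendsto_zero]
  refine squeeze_zero (fun _ => norm_nonneg _) (fun n => ?_)
    (tendsto_pow_atTop_nhds_zero_of_lt_one (r := (1 / 2 : ℝ)) (by norm_num) (by norm_num))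
  rw [Real.norm_eq_abs, abs_sub_comm]
  exact (abs_sub_cfConv_cfA_le hx n).trans (one_div_cfDen_mul_le (one_le_cfA_succ hx) n)

theorem cfXi_add_intCast_succ (x : ℝ) (k : ℤ) : ∀ n, cfXi (x + k) (n + 1) = cfXi x (n + 1)
  | 0 => by simp only [cfXi, Int.fract_add_intCast]
  | n + 1 => by
    show 1 / Int.fract (cfXi (x + k) (n + 1)) = 1 / Int.fract (cfXi x (n + 1))
    rw [cfXi_add_intCast_succ x k n]

end GaussMap

section Periodic

variable {c : ℕ → ℤ} {k : ℕ} {β : ℝ}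

theorem mul_cfDen_add_eq_of_tendsto_cfConv (hc : ∀ m, 1 ≤ c m)
    (hper : Function.Periodic c (k + 1)) (hβ : Tendsto (cfConv c) atTop (𝓝 β)) :
    β * (cfDen c (k + 1) * β + cfDen c k) = cfNum c (k + 1) * β + cfNum c k := by
  have hshift : (fun i => c (k + 1 + i)) = c := funext fun i => by rw [add_comm]; exact hper i
  have hQ : (1 : ℝ) ≤ cfDen c (k + 1) := by exact_mod_cast one_le_cfDen_succ (fun m => hc _) k
  have hQ' : (0 : ℝ) ≤ cfDen c k := by exact_mod_cast cfDen_nonneg (fun m => hc _) k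
  have hβ1 : 1 ≤ β := ge_of_tendsto' hβ (one_le_cfConv hc)
  have hden : (0 : ℝ) < cfDen c (k + 1) * β + cfDen c k := by nlinarith
  have hshifted : Tendsto (fun n => cfConv c (k + 1 + n)) atTop (𝓝 β) :=
    hβ.comp ((tendsto_add_atTop_nat (k + 1)).congr fun n => add_comm n (k + 1))
  have hmoebius := ((hβ.const_mul (cfNum c (k + 1) : ℝ)).add_const (cfNum c k : ℝ)).div
    ((hβ.const_mul (cfDen c (k + 1) : ℝ)).add_const (cfDen c k : ℝ)) hden.ne'
  have hcongr : ∀ n, cfConv c (k + 1 + n) = (cfNum c (k + 1) * cfConv c n + cfNum c k) /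
      (cfDen c (k + 1) * cfConv c n + cfDen c k) := fun n => by
    have hn : cfDen (fun i => c (k + 1 + i)) (n + 1) ≠ 0 := by
      rw [hshift]; exact (one_pos.trans_le (one_le_cfDen_succ (fun m => hc _) n)).ne'
    rw [cfConv_add c k n hn, hshift]
  have hfix := tendsto_nhds_unique (hshifted.congr hcongr) hmoebius
  rw [eq_div_iff hden.ne'] at hfix
  linear_combination hfix

theorem neg_one_div_mul_cfDen_add_eq_of_tendsto_cfConv_reverse (hc : ∀ m, 1 ≤ c m)
    (hβ : Tendsto (cfConv fun m => c (k - m % (k + 1))) atTop (𝓝 β)) :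
    (-1 / β) * (cfDen c (k + 1) * (-1 / β) + cfDen c k) =
      cfNum c (k + 1) * (-1 / β) + cfNum c k := by
  set d : ℕ → ℤ := fun m => c (k - m % (k + 1))
  have hd : ∀ m, 1 ≤ d m := fun m => hc _
  have hdper : Function.Periodic d (k + 1) := fun m => by simp [d]
  have hrev := cfNum_cfDen_reverse (c := c) (d := d) (k := k) fun i hi => by
    simp only [d, Nat.mod_eq_of_lt (Nat.lt_succ_of_le hi)]
  simp only [EmbeddingLike.apply_eq_iff_eq, Matrix.vecCons_inj, and_true] at hrev
  have hfix := mul_cfDen_add_eq_of_tendsto_cfConv hd hdper hβ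
  rw [hrev.1.1, hrev.1.2, hrev.2.1, hrev.2.2] at hfix
  have hβ0 : β ≠ 0 := (one_pos.trans_le (ge_of_tendsto' hβ (one_le_cfConv hd))).ne'
  field_simp
  linear_combination -hfix

end Periodic

theorem quadratic_vieta_sum {K : Type*} [Field K] {a h b x y : K}
    (hx : a * x ^ 2 + h * x + b = 0) (hy : a * y ^ 2 + h * y + b = 0) (hxy : x ≠ y) :
    a * (x + y) + h = 0 :=
  mul_left_cancel₀ (sub_ne_zero.2 hxy) (by linear_combination hx - hy)

theorem Irrational.eq_of_quadratic_roots {x y z : ℝ} (hx : Irrational x)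
    {a₁ h₁ b₁ a₂ h₂ b₂ : ℤ} (ha₁ : a₁ ≠ 0) (ha₂ : a₂ ≠ 0)
    (hx₁ : (a₁ : ℝ) * x ^ 2 + h₁ * x + b₁ = 0) (hy₁ : (a₁ : ℝ) * y ^ 2 + h₁ * y + b₁ = 0)
    (hx₂ : (a₂ : ℝ) * x ^ 2 + h₂ * x + b₂ = 0) (hz₂ : (a₂ : ℝ) * z ^ 2 + h₂ * z + b₂ = 0)
    (hyx : y ≠ x) (hzx : z ≠ x) : y = z := by
  have hlin : ((a₂ * h₁ - a₁ * h₂ : ℤ) : ℝ) * x + (a₂ * b₁ - a₁ * b₂ : ℤ) = 0 := by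
    push_cast
    linear_combination (a₂ : ℝ) * hx₁ - (a₁ : ℝ) * hx₂
  have hh : a₂ * h₁ - a₁ * h₂ = 0 := by
    by_contra hne
    exact ((hx.intCast_mul hne).add_intCast (a₂ * b₁ - a₁ * b₂)).ne_int 0
      (by rw [Int.cast_zero]; exact hlin)
  have hh' : (a₂ : ℝ) * h₁ - a₁ * h₂ = 0 := by exact_mod_cast hh
  have hprod : ((a₁ * a₂ : ℤ) : ℝ) * (y - z) = 0 := by
    push_cast
    linear_combination (a₂ : ℝ) * quadratic_vieta_sum hx₁ hy₁ hyx.symm -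
      (a₁ : ℝ) * quadratic_vieta_sum hx₂ hz₂ hzx.symm - hh'
  exact sub_eq_zero.1 ((mul_eq_zero.1 hprod).resolve_left (by exact_mod_cast mul_ne_zero ha₁ ha₂))

theorem conj_eq_neg_one_div_of_cfA_periodic {c : ℕ → ℤ} {k : ℕ} (hc : ∀ m, 1 ≤ c m)
    (hper : Function.Periodic c (k + 1)) {γ γ' β : ℝ} (hγ : Irrational γ) (hcγ : cfA γ = c)
    {a h b : ℤ} (ha : a ≠ 0) (hroot : (a : ℝ) * γ ^ 2 + h * γ + b = 0)
    (hroot' : (a : ℝ) * γ' ^ 2 + h * γ' + b = 0) (hne : γ' ≠ γ)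
    (hβ : Tendsto (cfConv fun m => c (k - m % (k + 1))) atTop (𝓝 β)) :
    γ' = -1 / β := by
  have hβ1 : 1 ≤ β := ge_of_tendsto' hβ (one_le_cfConv fun m => hc _)
  have hγ1 : (1 : ℝ) ≤ γ := by
    have h0 : (c 0 : ℝ) ≤ γ := by rw [← hcγ]; exact Int.floor_le γ
    exact le_trans (by exact_mod_cast hc 0) h0
  have hγfix := mul_cfDen_add_eq_of_tendsto_cfConv hc hper (hcγ ▸ tendsto_cfConv_cfA hγ)
  have hβfix := neg_one_div_mul_cfDen_add_eq_of_tendsto_cfConv_reverse hc hβ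
  refine hγ.eq_of_quadratic_roots ha (one_pos.trans_le (one_le_cfDen_succ (fun m => hc _) k)).ne'
    hroot hroot' (h₂ := cfDen c k - cfNum c (k + 1)) (b₂ := -cfNum c k) ?_ ?_ hne ?_
  · push_cast
    linear_combination hγfix
  · push_cast
    linear_combination hβfix
  · have : 0 < 1 / β := by positivity
    rw [neg_div]
    linarith

/-- Here `b j` stands for `b_{j+1}`, `0 ≤ j < l`, so the entry of the period of `β̃` at position
`m` is `b ((2*l-2-m) % l)`. -/
theorem conjugate_cf_pure_periodic_case_lt_general (l : ℕ) (a0 : ℤ) (b : ℕ → ℤ) (hl : 1 ≤ l)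
    (hb : ∀ j, j < l → 1 ≤ b j)
    (α α' : ℝ) (qa qh qb : ℤ) (hqa : qa ≠ 0) (hirr : Irrational α)
    (hroot : (qa : ℝ) * α ^ 2 + (qh : ℝ) * α + (qb : ℝ) = 0)
    (hroot' : (qa : ℝ) * α' ^ 2 + (qh : ℝ) * α' + (qb : ℝ) = 0)
    (hne : α' ≠ α)
    (hexp : ∀ n, cfA α n = if n = 0 then a0 else b ((n - 1) % l)) :
    ∃ β : ℝ, Tendsto (cfConv (fun m => b ((2 * l - 2 - m % l) % l))) atTop (nhds β) ∧
      α' = -(((b (l - 1) - a0 : ℤ) : ℝ) + 1 / β) := by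
  obtain ⟨L, rfl⟩ : ∃ L, l = L + 1 := ⟨l - 1, by omega⟩
  rw [Nat.add_sub_cancel]
  set t : ℤ := b L - a0
  set c : ℕ → ℤ := fun m => b ((m + L) % (L + 1))
  have hc : ∀ m, 1 ≤ c m := fun m => hb _ (Nat.mod_lt _ L.succ_pos)
  have hper : Function.Periodic c (L + 1) := fun m => by
    simp only [c, Nat.add_right_comm m (L + 1) L, Nat.add_mod_right]
  have hγ : cfA (α + t) = c := funext fun n => by
    cases n with
    | zero =>
      show ⌊α + (t : ℝ)⌋ = b ((0 + L) % (L + 1))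
      rw [Int.floor_add_intCast, show ⌊α⌋ = a0 from hexp 0, zero_add,
        Nat.mod_eq_of_lt L.lt_succ_self, add_sub_cancel]
    | succ n =>
      rw [cfA, cfXi_add_intCast_succ, ← cfA, hexp, if_neg n.succ_ne_zero, Nat.add_sub_cancel]
      simp only [c, Nat.add_right_comm n 1 L, Nat.add_assoc, Nat.add_mod_right]
  have hrev : (fun m => b ((2 * (L + 1) - 2 - m % (L + 1)) % (L + 1))) =
      fun m => c (L - m % (L + 1)) := funext fun m => by
    have := Nat.mod_lt m (by omega : 0 < L + 1)
    simp only [c]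
    congr 2
    omega
  rw [hrev]
  obtain ⟨β, hβ⟩ := cauchySeq_tendsto_of_complete (cauchySeq_cfConv
    (c := fun m => c (L - m % (L + 1))) fun m => hc _)
  refine ⟨β, hβ, ?_⟩
  have hconj := conj_eq_neg_one_div_of_cfA_periodic hc hper (hirr.add_intCast t) hγ hqa
    (γ' := α' + t) (h := qh - 2 * qa * t) (b := qa * t ^ 2 - qh * t + qb)
    (by push_cast; linear_combination hroot) (by push_cast; linear_combination hroot')
    (by simpa using hne) hβ
  rw [neg_div] at hconj
  linear_combination hconj

/-- If the quadratic irrational `α` has continued fraction expansion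
`[a₀; overline{b₁, …, b_l}]` with `a₀ < b_l`, then its conjugate is given by the negative
continued fraction `ᾱ = -[b_l - a₀; overline{b_{l-1}, …, b₁, b_l}]`, i.e.
`ᾱ = -(b_l - a₀ + 1/β̃)` where `β̃ = [overline{b_{l-1}, b_{l-2}, …, b₁, b_l}]`
(indices cyclic modulo `l`). Here `b j` denotes `b_{j+1}` for `0 ≤ j < l`, so the period
entry at position `m` is `b ((2*l-2-m) % l)`. -/
theorem conjugate_cf_pure_periodic_case_lt (l : ℕ) (a0 : ℤ) (b : ℕ → ℤ) (hl : 1 ≤ l)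
    (hb : ∀ j, j < l → 1 ≤ b j) (hlt : a0 < b (l - 1))
    (α α' : ℝ) (qa qh qb : ℤ) (hqa : qa ≠ 0) (hirr : Irrational α)
    (hroot : (qa : ℝ) * α ^ 2 + (qh : ℝ) * α + (qb : ℝ) = 0)
    (hroot' : (qa : ℝ) * α' ^ 2 + (qh : ℝ) * α' + (qb : ℝ) = 0)
    (hne : α' ≠ α)
    (hexp : ∀ n, cfA α n = if n = 0 then a0 else b ((n - 1) % l)) :
    ∃ β : ℝ, Tendsto (cfConv (fun m => b ((2 * l - 2 - m % l) % l))) atTop (nhds β) ∧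
      α' = -(((b (l - 1) - a0 : ℤ) : ℝ) + 1 / β) :=
  conjugate_cf_pure_periodic_case_lt_general l a0 b hl hb α α' qa qh qb hqa hirr hroot hroot' hne
    hexp

end
end
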